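/- In the described single-principal setting under the first price contract t^1(b,o) = b^1(o): for every bid b^1 ∈ V^1 and every index i with 1 < i ≤ q such that action a_i maximizes the agent's expected utility E_{o∼F_{a}}[b^1(o)] − ψ(a) over all actions a, the principal's expected utility satisfies E_{o∼F_{a_i}}[v^1(o) − b^1(o)] ≤ 1 − ε/(1−γ). -/

import Mathlib

/-- The data of a common agency setting: a finite set `A` of actions, a finite set `O` of
outcomes, `n` principals, a cost function `ψ`, outcome distributions `F a`, and valuation
domains `V ℓ`. -/
structure CAS where
  /-- the actions available to the agent -/
  A : Type
  [fintypeA : Fintype A]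
  [nonemptyA : Nonempty A]
  /-- the outcomes -/
  O : Type
  [fintypeO : Fintype O]
  [nonemptyO : Nonempty O]
  /-- the number of principals -/
  n : ℕ
  /-- the cost of each action -/
  ψ : A → ℝ
  /-- the outcome distribution induced by each action -/
  F : A → O → ℝ
  /-- the valuation domain of each principal -/
  V : Fin n → Set (O → ℝ)

attribute [instance] CAS.fintypeA CAS.nonemptyA CAS.fintypeO CAS.nonemptyO

namespace CAS

variable (S : CAS)

/-- Validity of a common agency setting: costs are nonnegative and some action has zero
cost, each `F a` is a probability distribution, and valuations are nonnegative. -/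
def Valid : Prop :=
  (∀ a, 0 ≤ S.ψ a) ∧ (∃ a, S.ψ a = 0) ∧
    (∀ a o, 0 ≤ S.F a o) ∧ (∀ a, ∑ o, S.F a o = 1) ∧
    (∀ ℓ, ∀ v ∈ S.V ℓ, ∀ o, 0 ≤ v o)

/-- A profile of one vector (valuation/bid) per principal. -/
abbrev Profile := Fin S.n → S.O → ℝ

/-- The profile `b` belongs to the product domain `V = V^1 × ⋯ × V^n`. -/
def InV (b : S.Profile) : Prop := ∀ ℓ, b ℓ ∈ S.V ℓ

/-- Expectation `E_{o ∼ F_a}[u(o)]`. -/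
noncomputable def Exp (a : S.A) (u : S.O → ℝ) : ℝ := ∑ o, S.F a o * u o

/-- Welfare `Wel^a(u) = Σ_ℓ E_{o ∼ F_a}[u^ℓ(o)] − ψ(a)`. -/
noncomputable def Wel (a : S.A) (u : S.Profile) : ℝ := (∑ ℓ, S.Exp a (u ℓ)) - S.ψ a

/-- A contract: a payment rule per principal, mapping a bid profile and an outcome
to a payment. -/
abbrev Contract := Fin S.n → S.Profile → S.O → ℝ

/-- The agent's expected utility from action `a` under contract `t` at bid profile `b`. -/
noncomputable def agentU (t : S.Contract) (b : S.Profile) (a : S.A) : ℝ :=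
  (∑ ℓ, S.Exp a (t ℓ b)) - S.ψ a

/-- `x` is the agent's chosen action `x*`: it maximizes the agent's expected utility, and
among utility-maximizing actions it maximizes the declared welfare. -/
def IsAgentChoice (t : S.Contract) (x : S.Profile → S.A) : Prop :=
  ∀ b, S.InV b →
    (∀ a, S.agentU t b a ≤ S.agentU t b (x b)) ∧
    (∀ a, S.agentU t b a = S.agentU t b (x b) → S.Wel a b ≤ S.Wel (x b) b)

/-- `astar` selects, for each profile `u`, an action `a*(u)` maximizing welfare. -/
def IsMaxSelection (astar : S.Profile → S.A) : Prop :=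
  ∀ u a, S.Wel a u ≤ S.Wel (astar u) u

/-- The IIVCG conditions for contract `t` with agent choice `x`:
(1) for every `b ∈ V` the agent's chosen action maximizes declared welfare
(`x*(b) = a*(b)`, so below `x b` plays the role of `a*(b)`); and
(2) there are functions `h^ℓ`, independent of `b^ℓ`, with
`E_{o∼F_{a*(b)}}[t^ℓ(b,o)] = h^ℓ(b^{−ℓ}) − Wel^{a*(b)}(b^{−ℓ},0)`. -/
def IsIIVCG (t : S.Contract) (x : S.Profile → S.A) : Prop :=
  (∀ b, S.InV b → ∀ a, S.Wel a b ≤ S.Wel (x b) b) ∧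
  ∃ h : Fin S.n → S.Profile → ℝ,
    (∀ ℓ, ∀ b b' : S.Profile, (∀ k, k ≠ ℓ → b k = b' k) → h ℓ b = h ℓ b') ∧
    (∀ b, S.InV b → ∀ ℓ, S.Exp (x b) (t ℓ b) =
      h ℓ b - S.Wel (x b) (Function.update b ℓ 0))

/-- Principal `ℓ`'s expected utility `E_{o∼F_{x*(b)}}[v(o) − t^ℓ(b,o)]` when her true
valuation is `v` and the bid profile is `b`. -/
noncomputable def prinU (t : S.Contract) (x : S.Profile → S.A) (ℓ : Fin S.n)
    (v : S.O → ℝ) (b : S.Profile) : ℝ :=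
  S.Exp (x b) (fun o => v o - t ℓ b o)

/-- Truthfulness: reporting the true valuation maximizes each principal's expected
utility, no matter what the others bid. -/
def Truthful (t : S.Contract) (x : S.Profile → S.A) : Prop :=
  ∀ ℓ, ∀ v ∈ S.V ℓ, ∀ b, S.InV b →
    S.prinU t x ℓ v b ≤ S.prinU t x ℓ v (Function.update b ℓ v)

/-- Individual rationality: a truthful principal gets nonnegative expected utility. -/
def IR (t : S.Contract) (x : S.Profile → S.A) : Prop :=
  ∀ ℓ, ∀ b, S.InV b → ∀ v ∈ S.V ℓ, 0 ≤ S.prinU t x ℓ v (Function.update b ℓ v)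

/-- Limited liability: all payments to the agent are nonnegative. -/
def LL (t : S.Contract) : Prop :=
  ∀ ℓ, ∀ b, S.InV b → ∀ o, 0 ≤ t ℓ b o

/-- `L_a`: the nonnegative payment vectors under which action `a` maximizes the agent's
expected utility. -/
def LSet (a : S.A) : Set (S.O → ℝ) :=
  { w | (∀ o, 0 ≤ w o) ∧ ∀ a', S.Exp a' w - S.ψ a' ≤ S.Exp a w - S.ψ a }

/-- `k_a = inf_{w ∈ L_a} E_{o∼F_a}[w(o)]`. -/
noncomputable def kval (a : S.A) : ℝ := sInf (S.Exp a '' S.LSet a)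

/-- The maximal welfare `max_{a ∈ A} Wel^a(u)` at profile `u`. -/
noncomputable def maxWel (u : S.Profile) : ℝ :=
  Finset.univ.sup' Finset.univ_nonempty fun a => S.Wel a u

/-- `m^ℓ(b) = inf_{ṽ ∈ V^ℓ} Wel^{a*(b^{−ℓ},ṽ)}(b^{−ℓ},ṽ) − Wel^{a*(b)}(b^{−ℓ},0)`,
where `x` plays the role of the welfare-maximizing selection `a*`. -/
noncomputable def mval (x : S.Profile → S.A) (ℓ : Fin S.n) (b : S.Profile) : ℝ :=
  sInf ((fun v => S.maxWel (Function.update b ℓ v)) '' S.V ℓ) -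
    S.Wel (x b) (Function.update b ℓ 0)

end CAS

/-- The price-of-stability ("gap") example: `q ≥ 2` actions, two outcomes `o_1, o_2`
(indices `0, 1`), where action `a_i` (index `j = i − 1`) yields outcome `o_2` with
probability `γ^{q−i}` and has cost `ψ(a_i) = γ^{1−i} − i + (i−1)(γ+ε)`, and a single
principal with valuation domain `{v : v(o_1) ≥ q, v(o_2) ≥ q}`. -/
noncomputable abbrev posSetting (q : ℕ) (hq : 2 ≤ q) (γ ε : ℝ) : CAS where
  A := Fin q
  nonemptyA := ⟨⟨0, by omega⟩⟩
  O := Fin 2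
  n := 1
  ψ := fun j => γ⁻¹ ^ (j : ℕ) - ((j : ℕ) + 1) + (j : ℕ) * (γ + ε)
  F := fun j o =>
    if (o : ℕ) = 1 then γ ^ (q - 1 - (j : ℕ)) else 1 - γ ^ (q - 1 - (j : ℕ))
  V := fun _ => { v | (q : ℝ) ≤ v 0 ∧ (q : ℝ) ≤ v 1 }

/-- Under the first price contract in the setting above, for every bid
`b ∈ V^1` and every `1 < i ≤ q` (i.e. index `j` with `0 < j`) such that `a_i` maximizes
the agent's expected utility `E_{F_a}[b] − ψ(a)`, the principal's expected utility at
the true valuation `v^1 = (q, q + γ^{1−q})` is at most `1 − ε/(1−γ)`. -/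
theorem first_price_PoS_bound (q : ℕ) (hq : 2 ≤ q) (γ ε : ℝ)
    (hγ0 : 0 < γ) (hγ : γ < 1 / q) (hε0 : 0 < ε) (hε : ε ≤ 1 / q - γ)
    (b : Fin 2 → ℝ) (hb : b ∈ (posSetting q hq γ ε).V 0)
    (v : Fin 2 → ℝ) (hv : v 0 = q ∧ v 1 = q + γ⁻¹ ^ (q - 1))
    (j : Fin q) (hj : 0 < (j : ℕ))
    (hmax : ∀ a : Fin q,
      (posSetting q hq γ ε).Exp a b - (posSetting q hq γ ε).ψ a ≤
        (posSetting q hq γ ε).Exp j b - (posSetting q hq γ ε).ψ j) :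
    (posSetting q hq γ ε).Exp j (fun o => v o - b o) ≤ 1 - ε / (1 - γ) := by
  obtain ⟨hb0, hb1⟩ := hb
  obtain ⟨hv0, hv1⟩ := hv
  have hjq : (j : ℕ) < q := j.isLt
  have hγ1 : γ < 1 := by
    have : (1:ℝ)/q ≤ 1 := by
      rw [div_le_one (by positivity)]
      exact_mod_cast Nat.one_le_iff_ne_zero.mpr (by omega)
    linarith
  have hγne : γ ≠ 0 := ne_of_gt hγ0
  set jn := (j : ℕ) with hjn
  set k := q - 1 - jn with hk
  have ek : q - 1 - (jn - 1) = k + 1 := by omega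
  have ekj : k + jn = q - 1 := by omega
  have H := hmax ⟨jn - 1, by omega⟩
  simp only [CAS.Exp, CAS.ψ, posSetting, Fin.sum_univ_two, Fin.val_zero, Fin.val_one,
    if_true, if_false, ek] at H ⊢
  norm_num at H ⊢
  -- abbreviations
  set P : ℝ := γ ^ k with hP
  set Q : ℝ := γ⁻¹ ^ (jn - 1) with hQ
  have hP0 : 0 < P := by positivity
  have hQ0 : 0 < Q := by positivity
  have e2 : jn = (jn - 1) + 1 := by omega
  have hQ1 : γ⁻¹ ^ jn = γ⁻¹ * Q := by
    have h := pow_succ' γ⁻¹ (jn - 1)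
    rw [← e2] at h
    rw [h, hQ]
  have hcast : ((jn - 1 : ℕ) : ℝ) = (jn : ℝ) - 1 := by
    have h1 : (1:ℕ) ≤ jn := hj
    push_cast [h1]
    try ring
  have hik : γ ^ k * γ⁻¹ ^ k = 1 := by
    rw [← mul_pow, mul_inv_cancel₀ hγne, one_pow]
  have hR : P * γ⁻¹ ^ (q - 1) = γ⁻¹ * Q := by
    rw [hP, ← ekj, pow_add, hQ1, ← mul_assoc, hik, one_mul]
  have hinv : γ * γ⁻¹ = 1 := mul_inv_cancel₀ hγne
  have hpow : γ ^ (k+1) = γ * P := by rw [pow_succ]; ring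
  simp only [← inv_pow, ← hjn, hcast] at H
  rw [hQ1, ← hQ, hpow] at H
  rw [hv0, hv1]
  clear_value jn k P Q
  have h1γ : (0:ℝ) < 1 - γ := by linarith
  have hεd : ε / (1 - γ) * (1 - γ) = ε := div_mul_cancel₀ ε (ne_of_gt h1γ)
  have HK : γ⁻¹ * Q - Q - (1 - γ) + ε ≤ P * (1 - γ) * (b 1 - b 0) := by linarith [H]
  have hQinv : γ * (γ⁻¹ * Q) = Q := by rw [← mul_assoc, hinv, one_mul]
  have key : γ⁻¹ * Q - 1 + ε / (1 - γ) ≤ P * (b 1 - b 0) := by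
    rw [← mul_le_mul_iff_left₀ h1γ]
    have hεd' : ε / (1 - γ) * (1 - γ) = ε := hεd
    nlinarith [HK, hQinv, hεd']
  linarith [key, hR, hb0, hP0, mul_le_mul_of_nonneg_left hb0 (le_of_lt hP0)]
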